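/- Fix a positive integer k. For each integer n ≥ 3, let μ_n ∈ ℝ and σ_n > 0 be reals with μ_n/σ_n > √(2 ln n), let D₁⁽ⁿ⁾, …, D_{n−2}⁽ⁿ⁾ be independent, identically distributed real-valued random variables each with Gaussian law N(μ_n, σ_n²), and let δ_n be any real threshold with δ_n ≤ μ_n − σ_n·√(2 ln n). Then the probability that at most k−1 of the variables D₁⁽ⁿ⁾, …, D_{n−2}⁽ⁿ⁾ take a value ≤ δ_n tends to 1 as n → ∞. -/

import Mathlib

/-!
Put `t = √(2 ln n)`. By Mills' ratio a single `N(μ, σ²)` variable lies below `μ - σ t` with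
probability at most `φ(t) / t = 1 / (n t √(2π))`, where `φ` is the standard normal density.
By the union bound, with probability at least `1 - 1 / (t √(2π)) → 1` none of the `n - 2`
variables lies below `δ ≤ μ - σ t`, and then their count is `0 ≤ k - 1`.
-/

open MeasureTheory ProbabilityTheory Filter Set Real Topology
open scoped NNReal

namespace ProbabilityTheory

lemma gaussianPDFReal_zero_one (x : ℝ) :
    gaussianPDFReal 0 1 x = (√(2 * π))⁻¹ * exp (-(1 / 2) * x ^ 2) := by
  simp only [gaussianPDFReal, NNReal.coe_one, mul_one, sub_zero]
  ring_nf

lemma hasDerivAt_gaussianPDFReal_zero_one (x : ℝ) :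
    HasDerivAt (gaussianPDFReal 0 1) (-x * gaussianPDFReal 0 1 x) x := by
  rw [funext gaussianPDFReal_zero_one]
  refine ((((hasDerivAt_pow 2 x).const_mul (-(1 / 2) : ℝ)).exp).const_mul _).congr_deriv ?_
  push_cast
  ring

lemma integrable_mul_gaussianPDFReal_zero_one :
    Integrable fun x => x * gaussianPDFReal 0 1 x := by
  simp_rw [gaussianPDFReal_zero_one, mul_left_comm _ (√(2 * π))⁻¹]
  exact (integrable_mul_exp_neg_mul_sq (by norm_num)).const_mul _

lemma tendsto_gaussianPDFReal_zero_one_atBot :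
    Tendsto (gaussianPDFReal 0 1) atBot (𝓝 0) := by
  have hsq : Tendsto (fun x : ℝ => x ^ 2) atBot atTop := by
    simpa [Function.comp_def] using
      (tendsto_pow_atTop (α := ℝ) two_ne_zero).comp tendsto_neg_atBot_atTop
  have h : Tendsto (fun x : ℝ => -(1 / 2) * x ^ 2) atBot atBot :=
    hsq.const_mul_atTop_of_neg (by norm_num)
  rw [funext gaussianPDFReal_zero_one, ← mul_zero (√(2 * π))⁻¹]
  exact (tendsto_exp_atBot.comp h).const_mul _

/-- Mills' ratio. -/
lemma gaussianReal_zero_one_Iic_neg_le {t : ℝ} (ht : 0 < t) :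
    gaussianReal 0 1 (Iic (-t)) ≤ ENNReal.ofReal (gaussianPDFReal 0 1 t / t) := by
  rw [gaussianReal_apply_eq_integral 0 one_ne_zero]
  refine ENNReal.ofReal_le_ofReal ?_
  have hFTC : ∫ x in Iic (-t), -x * gaussianPDFReal 0 1 x = gaussianPDFReal 0 1 t := by
    rw [integral_Iic_of_hasDerivAt_of_tendsto' (fun x _ => hasDerivAt_gaussianPDFReal_zero_one x)
      (by simpa using integrable_mul_gaussianPDFReal_zero_one.neg.integrableOn)
      tendsto_gaussianPDFReal_zero_one_atBot]
    simp [gaussianPDFReal_zero_one]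
  calc ∫ x in Iic (-t), gaussianPDFReal 0 1 x
      ≤ ∫ x in Iic (-t), -x * gaussianPDFReal 0 1 x / t := by
        refine setIntegral_mono_on (integrable_gaussianPDFReal 0 1).integrableOn
          (by simpa using (integrable_mul_gaussianPDFReal_zero_one.neg.div_const t).integrableOn)
          measurableSet_Iic fun x (hx : x ≤ -t) => ?_
        rw [mul_div_right_comm]
        exact le_mul_of_one_le_left (gaussianPDFReal_nonneg 0 1 x)
          ((one_le_div ht).2 (by linarith))
    _ = gaussianPDFReal 0 1 t / t := by rw [integral_div, hFTC]

lemma gaussianReal_Iic_sub_sqrt_mul {v : ℝ≥0} (hv : v ≠ 0) (μ t : ℝ) :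
    gaussianReal μ v (Iic (μ - √v * t)) = gaussianReal 0 1 (Iic (-t)) := by
  have hσ : 0 < √(v : ℝ) := by positivity
  have hstd : (gaussianReal μ v).map (fun x => (x - μ) / √v) = gaussianReal 0 1 := by
    rw [show (fun x : ℝ => (x - μ) / √v) = (· / √v) ∘ (· - μ) from rfl,
      ← Measure.map_map (by fun_prop) (by fun_prop), gaussianReal_map_sub_const,
      gaussianReal_map_div_const, sub_self, zero_div]
    congr
    ext
    simp [hv]
  rw [← hstd, Measure.map_apply (by fun_prop) measurableSet_Iic]
  congr
  ext x
  simp only [mem_Iic, mem_preimage, div_le_iff₀ hσ]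
  constructor <;> intro h <;> linarith

lemma gaussianPDFReal_zero_one_sqrt_two_mul_log {x : ℝ} (hx : 1 ≤ x) :
    gaussianPDFReal 0 1 √(2 * log x) = (√(2 * π))⁻¹ * x⁻¹ := by
  rw [gaussianPDFReal_zero_one, sq_sqrt (by positivity [log_nonneg hx]),
    show -(1 / 2) * (2 * log x) = -log x by ring, exp_neg, exp_log (by linarith)]

end ProbabilityTheory

lemma MeasureTheory.measure_exists_mem_le_card_mul {ι Ω E : Type*} [Fintype ι]
    [MeasurableSpace Ω] [MeasurableSpace E] {P : Measure Ω} {ν : Measure E} {X : ι → Ω → E}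
    (hX : ∀ i, HasLaw (X i) ν P) {s : Set E} (hs : MeasurableSet s) :
    P {ω | ∃ i, X i ω ∈ s} ≤ Fintype.card ι * ν s := by
  calc P {ω | ∃ i, X i ω ∈ s} = P (⋃ i, {ω | X i ω ∈ s}) := by rw [ofPred_exists]
    _ ≤ ∑ i, P {ω | X i ω ∈ s} := measure_iUnion_fintype_le P _
    _ = Fintype.card ι * ν s := by simp [(hX _).measure_eq (p := (· ∈ s)) hs]

lemma compl_setOf_natCard_le_subset_setOf_exists {ι Ω : Type*} (p : ι → Ω → Prop) (m : ℕ) :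
    {ω | Nat.card {i // p i ω} ≤ m}ᶜ ⊆ {ω | ∃ i, p i ω} := by
  intro ω hω
  by_contra! hnone
  have : IsEmpty {i // p i ω} := ⟨fun i => hnone ⟨i.1, i.2⟩⟩
  exact hω (by simp)

lemma MeasureTheory.tendsto_measure_one_of_tendsto_measure_compl {α : Type*} {Ω : α → Type*}
    [∀ a, MeasurableSpace (Ω a)] {P : ∀ a, Measure (Ω a)} [∀ a, IsProbabilityMeasure (P a)]
    {l : Filter α} {S : ∀ a, Set (Ω a)} (h : Tendsto (fun a => P a (S a)ᶜ) l (𝓝 0)) :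
    Tendsto (fun a => P a (S a)) l (𝓝 1) := by
  have hlow : Tendsto (fun a => 1 - P a (S a)ᶜ) l (𝓝 1) := by
    simpa using ENNReal.Tendsto.sub tendsto_const_nhds h (.inl ENNReal.one_ne_top)
  refine tendsto_of_tendsto_of_tendsto_of_le_of_le hlow tendsto_const_nhds (fun a => ?_)
    fun a => prob_le_one
  rw [tsub_le_iff_right, ← measure_univ (μ := P a)]
  exact measure_univ_le_add_compl _

lemma ProbabilityTheory.measure_exists_le_sub_sqrt_mul_sqrt_two_mul_log_le {ι Ω : Type*}
    [Fintype ι] [MeasurableSpace Ω] {P : Measure Ω} {μ δ : ℝ} {v : ℝ≥0} (hv : v ≠ 0) {X : ι → Ω → ℝ}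
    (hX : ∀ i, P.map (X i) = gaussianReal μ v) {n : ℝ} (hn : 1 < n)
    (hcard : (Fintype.card ι : ℝ) ≤ n) (hδ : δ ≤ μ - √v * √(2 * log n)) :
    P {ω | ∃ i, X i ω ≤ δ} ≤ ENNReal.ofReal ((√(2 * π))⁻¹ / √(2 * log n)) := by
  have ht : 0 < √(2 * log n) := by have := log_pos hn; positivity
  have hlaw : ∀ i, HasLaw (X i) (gaussianReal μ v) P :=
    fun i => ⟨.of_map_ne_zero ((hX i).symm ▸ IsProbabilityMeasure.ne_zero _), hX i⟩
  calc P {ω | ∃ i, X i ω ≤ δ}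
      ≤ Fintype.card ι * gaussianReal μ v (Iic δ) :=
        measure_exists_mem_le_card_mul hlaw measurableSet_Iic
    _ ≤ ENNReal.ofReal n * gaussianReal 0 1 (Iic (-√(2 * log n))) := by
        rw [← gaussianReal_Iic_sub_sqrt_mul hv μ]
        gcongr
        rw [← ENNReal.ofReal_natCast]
        exact ENNReal.ofReal_le_ofReal hcard
    _ ≤ ENNReal.ofReal n *
          ENNReal.ofReal (gaussianPDFReal 0 1 √(2 * log n) / √(2 * log n)) := by
        gcongr
        exact gaussianReal_zero_one_Iic_neg_le ht
    _ = ENNReal.ofReal ((√(2 * π))⁻¹ / √(2 * log n)) := by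
        rw [← ENNReal.ofReal_mul (by linarith), gaussianPDFReal_zero_one_sqrt_two_mul_log hn.le]
        congr 1
        field_simp

theorem at_most_k_minus_one_below_threshold_tendsto_one_general
    (k : ℕ)
    (Ω : ℕ → Type) [∀ n, MeasurableSpace (Ω n)]
    (P : ∀ n, Measure (Ω n)) [∀ n, IsProbabilityMeasure (P n)]
    (μ σ δ : ℕ → ℝ)
    (D : ∀ n, Fin (n - 2) → Ω n → ℝ)
    (hσ : ∀ n : ℕ, 3 ≤ n → 0 < σ n)
    (hdist : ∀ n : ℕ, 3 ≤ n → ∀ i,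
      Measure.map (D n i) (P n) = gaussianReal (μ n) ⟨(σ n) ^ 2, sq_nonneg _⟩)
    (hδ : ∀ n : ℕ, 3 ≤ n → δ n ≤ μ n - σ n * Real.sqrt (2 * Real.log n)) :
    Tendsto (fun n => P n {ω | Nat.card {i : Fin (n - 2) // D n i ω ≤ δ n} ≤ k - 1})
      atTop (nhds 1) := by
  refine tendsto_measure_one_of_tendsto_measure_compl ?_
  have hbound : ∀ n : ℕ, 3 ≤ n →
      P n {ω | Nat.card {i : Fin (n - 2) // D n i ω ≤ δ n} ≤ k - 1}ᶜ
        ≤ ENNReal.ofReal ((√(2 * π))⁻¹ / √(2 * log n)) := by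
    intro n hn
    refine (measure_mono (compl_setOf_natCard_le_subset_setOf_exists _ _)).trans
      (measure_exists_le_sub_sqrt_mul_sqrt_two_mul_log_le ?_ (hdist n hn) ?_ ?_ ?_)
    · refine fun h => (hσ n hn).ne' (pow_eq_zero_iff two_ne_zero |>.1 ?_)
      exact congrArg NNReal.toReal h
    · exact_mod_cast (by omega : 1 < n)
    · simp
    · change δ n ≤ μ n - √(σ n ^ 2) * √(2 * log n)
      rw [sqrt_sq (hσ n hn).le]
      exact hδ n hn
  have hlim :
      Tendsto (fun n : ℕ => ENNReal.ofReal ((√(2 * π))⁻¹ / √(2 * log n))) atTop (𝓝 0) := by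
    rw [← ENNReal.ofReal_zero]
    refine ENNReal.tendsto_ofReal (tendsto_const_nhds.div_atTop ?_)
    exact tendsto_sqrt_atTop.comp <|
      (tendsto_log_atTop.comp tendsto_natCast_atTop_atTop).const_mul_atTop two_pos
  exact tendsto_of_tendsto_of_tendsto_of_le_of_le' tendsto_const_nhds hlim
    (.of_forall fun _ => zero_le) (eventually_ge_atTop 3 |>.mono hbound)

/-- Fix a positive integer `k`. For each integer `n ≥ 3`, let `μ n`, `σ n > 0`
with `μ n / σ n > √(2 ln n)`, let `D n 1, …, D n (n-2)` be i.i.d. real random variables with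
Gaussian law `N(μ n, (σ n)²)`, and let `δ n ≤ μ n − σ n · √(2 ln n)`. Then the probability
that at most `k − 1` of the variables take a value `≤ δ n` tends to `1` as `n → ∞`. -/
theorem at_most_k_minus_one_below_threshold_tendsto_one
    (k : ℕ) (hk : 0 < k)
    (Ω : ℕ → Type) [∀ n, MeasurableSpace (Ω n)]
    (P : ∀ n, Measure (Ω n)) [∀ n, IsProbabilityMeasure (P n)]
    (μ σ δ : ℕ → ℝ)
    (D : ∀ n, Fin (n - 2) → Ω n → ℝ)
    (hσ : ∀ n : ℕ, 3 ≤ n → 0 < σ n)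
    (hratio : ∀ n : ℕ, 3 ≤ n → Real.sqrt (2 * Real.log n) < μ n / σ n)
    (hindep : ∀ n : ℕ, 3 ≤ n → iIndepFun (D n) (P n))
    (hdist : ∀ n : ℕ, 3 ≤ n → ∀ i,
      Measure.map (D n i) (P n) = gaussianReal (μ n) ⟨(σ n) ^ 2, sq_nonneg _⟩)
    (hδ : ∀ n : ℕ, 3 ≤ n → δ n ≤ μ n - σ n * Real.sqrt (2 * Real.log n)) :
    Tendsto (fun n => P n {ω | Nat.card {i : Fin (n - 2) // D n i ω ≤ δ n} ≤ k - 1})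
      atTop (nhds 1) :=
  at_most_k_minus_one_below_threshold_tendsto_one_general k Ω P μ σ δ D hσ hdist hδ
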